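/- Let C be a tensor code of dimension k in 𝔽 and let j ∈ {1,…,k}. For all 𝔞 ∈ 𝔑^cl ∪ {𝔬}: if [𝔞] < t_j^cl(C) then B_𝔞^{(cl,j)}(C) = 0, and if [𝔞] > n − s₁^cl(C^⊥) then B_𝔞^{(cl,j)}(C) = [k + [𝔞] − n choose j]_q · ∏_{i=1}^r [n_i choose 𝔞_i]_q. -/

import Mathlib

open Module Function

namespace TensorPaper

variable {F : Type*} [Field F] [Fintype F]

/-- The tensor space `𝔽 = 𝔽_q^{n₁} ⊗ ⋯ ⊗ 𝔽_q^{n_r}`, identified with `r`-dimensional arrays. -/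
abbrev TSpace (F : Type*) {r : ℕ} (n : Fin r → ℕ) : Type _ := (∀ i, Fin (n i)) → F

/-- The dual code with respect to the standard bilinear form `X*Y = ∑ X_m Y_m`. -/
def dualCode {ι : Type*} [Fintype ι] (C : Submodule F (ι → F)) : Submodule F (ι → F) where
  carrier := { X | ∀ Y ∈ C, ∑ m, X m * Y m = 0 }
  add_mem' := by
    intro a b ha hb Y hY
    have h1 := ha Y hY
    have h2 := hb Y hY
    simp only [Pi.add_apply, add_mul]
    rw [Finset.sum_add_distrib, h1, h2, add_zero]
  zero_mem' := by
    intro Y _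
    simp
  smul_mem' := by
    intro c a ha Y hY
    have h1 := ha Y hY
    simp only [Pi.smul_apply, smul_eq_mul, mul_assoc]
    rw [← Finset.mul_sum, h1, mul_zero]

/-- The array corresponding to a simple (rank-one) tensor `x⁽¹⁾ ⊗ ⋯ ⊗ x⁽ʳ⁾`. -/
def simpleTensor {r : ℕ} (n : Fin r → ℕ) (x : ∀ i, Fin (n i) → F) : TSpace F n :=
  fun m => ∏ i, x i (m i)

/-- The closure-type anticode `A⁽¹⁾ ⊗ ⋯ ⊗ A⁽ʳ⁾`: the span of all simple tensors whose
`i`-th factor lies in `U i`. -/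
def closureAnticode {r : ℕ} (n : Fin r → ℕ) (U : ∀ i, Submodule F (Fin (n i) → F)) :
    Submodule F (TSpace F n) :=
  Submodule.span F { X | ∃ x : ∀ i, Fin (n i) → F, (∀ i, x i ∈ U i) ∧ X = simpleTensor n x }

/-- The family `𝒜^cl` of closure-type anticodes. -/
def ClosureAnticodes {r : ℕ} (n : Fin r → ℕ) : Set (Submodule F (TSpace F n)) :=
  { A | ∃ U : ∀ i, Submodule F (Fin (n i) → F), A = closureAnticode n U }

/-- The family `𝒜^R` of Ravagnani-type anticodes:
`𝔽^{n₁} ⊗ ⋯ ⊗ A^{(i)} ⊗ ⋯ ⊗ 𝔽^{n_r}` with `n_i = n₁`. -/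
def RavagnaniAnticodes {r : ℕ} (n : Fin (r + 2) → ℕ) : Set (Submodule F (TSpace F n)) :=
  { A | ∃ (i : Fin (r + 2)) (U : Submodule F (Fin (n i) → F)),
      n i = n 0 ∧ A = closureAnticode n (Function.update (fun s => ⊤) i U) }

/-- The family `𝒜^D` of Delsarte-type anticodes:
`𝔽^{n₁} ⊗ ⋯ ⊗ A^{(i)} ⊗ ⋯ ⊗ 𝔽^{n_r}` with `i ≠ p` for some `p` with `n_p = n_r`. -/
def DelsarteAnticodes {r : ℕ} (n : Fin (r + 2) → ℕ) : Set (Submodule F (TSpace F n)) :=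
  { A | ∃ (p i : Fin (r + 2)), n p = n (Fin.last (r + 1)) ∧ i ≠ p ∧
      ∃ U : Submodule F (Fin (n i) → F),
        A = closureAnticode n (Function.update (fun s => ⊤) i U) }

/-- The `j`-th tensor weight `t_j^R` of `C` with respect to `𝒜^R`, with the convention
`t^R({0}) = n + n/n₁`. -/
noncomputable def tR {r : ℕ} (n : Fin (r + 2) → ℕ) (j : ℕ) (C : Submodule F (TSpace F n)) : ℕ := by
  classical exact
    if C = ⊥ then (∏ i, n i) + (∏ i, n i) / n 0
    else sInf { a | ∃ A ∈ RavagnaniAnticodes n, j ≤ finrank F ↥(C ⊓ A) ∧ finrank F ↥A = a }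

/-- The `j`-th tensor weight `t_j^D` of `C` with respect to `𝒜^D`. -/
noncomputable def tD {r : ℕ} (n : Fin (r + 2) → ℕ) (j : ℕ) (C : Submodule F (TSpace F n)) : ℕ :=
  sInf { a | ∃ A ∈ DelsarteAnticodes n, j ≤ finrank F ↥(C ⊓ A) ∧ finrank F ↥A = a }

/-- The `j`-th tensor weight `t_j^cl` of `C` with respect to `𝒜^cl`. -/
noncomputable def tCl {r : ℕ} (n : Fin r → ℕ) (j : ℕ) (C : Submodule F (TSpace F n)) : ℕ :=
  sInf { a | ∃ A ∈ ClosureAnticodes n, j ≤ finrank F ↥(C ⊓ A) ∧ finrank F ↥A = a }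

/-- The `j`-th dual tensor weight `s_j^cl` of `C` with respect to the dual anticodes
`𝒜̄^cl = {A^⊥ : A ∈ 𝒜^cl}`. -/
noncomputable def sCl {r : ℕ} (n : Fin r → ℕ) (j : ℕ) (C : Submodule F (TSpace F n)) : ℕ :=
  sInf { a | ∃ A ∈ ClosureAnticodes n,
    j ≤ finrank F ↥(C ⊓ dualCode A) ∧ finrank F ↥(dualCode A) = a }

/-- `C` is `j`-TMRD with respect to `𝒜^R`: `t_j^R(C) = n − (n/n₁)⌊(n₁/n)(k−j)⌋`. -/
def isTMRD {r : ℕ} (n : Fin (r + 2) → ℕ) (j : ℕ) (C : Submodule F (TSpace F n)) : Prop :=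
  tR n j C = (∏ i, n i) - ((∏ i, n i) / n 0) * (n 0 * (finrank F ↥C - j) / ∏ i, n i)

/-- `C` is `j`-TBMD with respect to `𝒜^R`: `n − t_j^R(C) − t₁^R(C^⊥) < 0`. -/
def isTBMD {r : ℕ} (n : Fin (r + 2) → ℕ) (j : ℕ) (C : Submodule F (TSpace F n)) : Prop :=
  ((∏ i, n i : ℕ) : ℤ) - tR n j C - tR n 1 (dualCode C) < 0

/-- The Gaussian binomial coefficient `[a choose b]_q`, equal to `0` if `a < b`. -/
noncomputable def qBinom (q : ℕ) (a : ℤ) (b : ℕ) : ℚ :=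
  if a < (b : ℤ) then 0
  else ∏ i ∈ Finset.range b, ((q : ℚ) ^ (a - i).toNat - 1) / ((q : ℚ) ^ (i + 1) - 1)

/-- The `(a,j)`-th tensor binomial moment of `C` with respect to `𝒜^R`. -/
noncomputable def BR {r : ℕ} (n : Fin (r + 2) → ℕ) (j : ℕ) (C : Submodule F (TSpace F n))
    (a : ℕ) : ℚ :=
  ∑ᶠ A ∈ (RavagnaniAnticodes n ∩ {A | finrank F ↥A = a}),
    qBinom (Fintype.card F) (finrank F ↥(C ⊓ A)) j

/-- The `(a,j)`-th entry of the weight distribution of `C` with respect to `𝒜^R`. -/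
noncomputable def WR {r : ℕ} (n : Fin (r + 2) → ℕ) (j : ℕ) (C : Submodule F (TSpace F n))
    (a : ℕ) : ℚ :=
  ∑ᶠ A ∈ (RavagnaniAnticodes n ∩ {A | finrank F ↥A = a}),
    (Nat.card {D : Submodule F (TSpace F n) //
      D ≤ C ⊓ A ∧ finrank F ↥D = j ∧
      ∀ B ∈ RavagnaniAnticodes n, D ≤ B → B ≤ A → B = A} : ℚ)

/-- The `(a,j)`-th tensor binomial moment of `C` with respect to `𝒜^D`. -/
noncomputable def BD {r : ℕ} (n : Fin (r + 2) → ℕ) (j : ℕ) (C : Submodule F (TSpace F n))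
    (a : ℕ) : ℚ :=
  ∑ᶠ A ∈ (DelsarteAnticodes n ∩ {A | finrank F ↥A = a}),
    qBinom (Fintype.card F) (finrank F ↥(C ⊓ A)) j

/-- The `(a,j)`-th entry of the weight distribution of `C` with respect to `𝒜^D`. -/
noncomputable def WD {r : ℕ} (n : Fin (r + 2) → ℕ) (j : ℕ) (C : Submodule F (TSpace F n))
    (a : ℕ) : ℚ :=
  ∑ᶠ A ∈ (DelsarteAnticodes n ∩ {A | finrank F ↥A = a}),
    (Nat.card {D : Submodule F (TSpace F n) //
      D ≤ C ⊓ A ∧ finrank F ↥D = j ∧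
      ∀ B ∈ DelsarteAnticodes n, D ≤ B → B ≤ A → B = A} : ℚ)

/-- The `(a,j)`-th normalized tensor binomial moment of `C` with respect to `𝒜^R`. -/
noncomputable def bR {r : ℕ} (n : Fin (r + 2) → ℕ) (j : ℕ) (C : Submodule F (TSpace F n))
    (a : ℤ) : ℚ :=
  if a < 0 then 0
  else if a ≤ ((∏ i, n i : ℕ) : ℤ) - tR n j C - tR n 1 (dualCode C) then
    BR n j C (a.toNat + tR n j C) /
      ((RavagnaniAnticodes (F := F) n ∩ {A | finrank F ↥A = a.toNat + tR n j C}).ncard : ℚ)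
  else if ((∏ i, n i : ℕ) : ℤ) ∣ a * n 0 then
    qBinom (Fintype.card F) ((finrank F ↥C : ℤ) + a + tR n j C - (∏ i, n i : ℕ)) j
  else 0

/-- The `j`-th tensor zeta function of `C` with respect to `𝒜^R`. -/
noncomputable def ZR {r : ℕ} (n : Fin (r + 2) → ℕ) (j : ℕ) (C : Submodule F (TSpace F n)) :
    PowerSeries ℚ :=
  PowerSeries.mk fun a => bR n j C (a : ℤ)

/-- The `q`-Bernstein polynomial `𝓑_{b,a}(X,Y;q)`. -/
noncomputable def qBernstein {R : Type*} [CommRing R] [Algebra ℚ R] (q : ℕ) (b a : ℕ)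
    (X Y : R) : R :=
  algebraMap ℚ R (qBinom q (b : ℤ) a) * Y ^ a *
    ∏ c ∈ Finset.range (b - a), (X - (q : R) ^ c * Y)

/-- The closure-type anticodes with dimension distribution `𝔞`. -/
def closureAnticodesOf {r : ℕ} (n : Fin r → ℕ) (𝔞 : Fin r → ℕ) :
    Set (Submodule F (TSpace F n)) :=
  { A | ∃ U : ∀ i, Submodule F (Fin (n i) → F),
      (∀ i, finrank F ↥(U i) = 𝔞 i) ∧ A = closureAnticode n U }

/-- The refined tensor binomial moment `B_𝔞^{(cl,j)}(C)`. -/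
noncomputable def BCl {r : ℕ} (n : Fin r → ℕ) (j : ℕ) (C : Submodule F (TSpace F n))
    (𝔞 : Fin r → ℕ) : ℚ :=
  ∑ᶠ A ∈ closureAnticodesOf n 𝔞, qBinom (Fintype.card F) (finrank F ↥(C ⊓ A)) j

/-- The refined weight distribution `W_𝔞^{(cl,j)}(C)`. -/
noncomputable def WCl {r : ℕ} (n : Fin r → ℕ) (j : ℕ) (C : Submodule F (TSpace F n))
    (𝔞 : Fin r → ℕ) : ℚ :=
  ∑ᶠ A ∈ closureAnticodesOf n 𝔞,
    (Nat.card {D : Submodule F (TSpace F n) //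
      D ≤ C ⊓ A ∧ finrank F ↥D = j ∧
      ∀ B ∈ ClosureAnticodes n, D ≤ B → B ≤ A → B = A} : ℚ)

/-- The refined tensor binomial moment `B_𝔞^{(D,j)}(C)` for Delsarte-type anticodes. -/
noncomputable def BDref {r : ℕ} (n : Fin (r + 2) → ℕ) (j : ℕ) (C : Submodule F (TSpace F n))
    (𝔞 : Fin (r + 2) → ℕ) : ℚ :=
  ∑ᶠ A ∈ (DelsarteAnticodes n ∩ closureAnticodesOf n 𝔞),
    qBinom (Fintype.card F) (finrank F ↥(C ⊓ A)) j

/-- The refined tensor binomial moment `B_𝔞^{(R,j)}(C)` for Ravagnani-type anticodes. -/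
noncomputable def BRref {r : ℕ} (n : Fin (r + 2) → ℕ) (j : ℕ) (C : Submodule F (TSpace F n))
    (𝔞 : Fin (r + 2) → ℕ) : ℚ :=
  ∑ᶠ A ∈ (RavagnaniAnticodes n ∩ closureAnticodesOf n 𝔞),
    qBinom (Fintype.card F) (finrank F ↥(C ⊓ A)) j

/-- The power series `P(T^m)` obtained from a polynomial `P` by substituting `T^m`. -/
noncomputable def substPow (P : Polynomial ℚ) (m : ℕ) : PowerSeries ℚ :=
  ∑ i ∈ Finset.range (P.natDegree + 1), PowerSeries.C (P.coeff i) * PowerSeries.X ^ (m * i)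



section Aux
set_option linter.unusedSectionVars false
open scoped TensorProduct
open PiTensorProduct

variable {ρ : ℕ}

noncomputable def stML (n : Fin ρ → ℕ) : MultilinearMap F (fun i => Fin (n i) → F) (TSpace F n) :=
  MultilinearMap.pi fun m =>
    (MultilinearMap.mkPiAlgebra F (Fin ρ) F).compLinearMap fun i => LinearMap.proj (m i)

lemma stML_apply (n : Fin ρ → ℕ) (x : ∀ i, Fin (n i) → F) : stML n x = simpleTensor n x := rfl

noncomputable def phi (n : Fin ρ → ℕ) : (⨂[F] i, (Fin (n i) → F)) →ₗ[F] TSpace F n :=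
  lift (stML n)

open scoped Classical in
noncomputable def psi (n : Fin ρ → ℕ) : TSpace F n →ₗ[F] ⨂[F] i, (Fin (n i) → F) :=
  ∑ M : ∀ i, Fin (n i), (LinearMap.proj M : TSpace F n →ₗ[F] F).smulRight
    (⨂ₜ[F] i, Pi.single (M i) (1 : F))

lemma pi_single_expansion {k : ℕ} (x : Fin k → F) : x = ∑ t, x t • (Pi.single t 1 : Fin k → F) := by
  ext j
  simp [Pi.single_apply, mul_ite, Finset.sum_ite_eq]

lemma simpleTensor_single (n : Fin ρ → ℕ) (M : ∀ i, Fin (n i)) [DecidableEq (∀ i, Fin (n i))] :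
    simpleTensor n (fun i => Pi.single (M i) (1 : F)) = Pi.single M (1 : F) := by
  funext m
  by_cases h : m = M
  · subst h
    simp [simpleTensor, Pi.single_apply]
  · obtain ⟨i, hi⟩ := Function.ne_iff.1 h
    rw [Pi.single_apply, if_neg h]
    exact Finset.prod_eq_zero (Finset.mem_univ i) (by simp [Pi.single_apply, hi])

lemma tprod_expansion (n : Fin ρ → ℕ) (x : ∀ i, Fin (n i) → F) :
    (⨂ₜ[F] i, x i)
      = ∑ M : ∀ i, Fin (n i), (∏ i, x i (M i)) • ⨂ₜ[F] i, Pi.single (M i) (1 : F) := by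
  classical
  calc (⨂ₜ[F] i, x i) = (PiTensorProduct.tprod F) (fun i => ∑ t, x i t • (Pi.single t 1 : Fin (n i) → F)) := by
        congr 1; funext i; exact pi_single_expansion (x i)
    _ = ∑ M : ∀ i, Fin (n i), (PiTensorProduct.tprod F) (fun i => x i (M i) • (Pi.single (M i) 1 : Fin (n i) → F)) :=
        MultilinearMap.map_sum _ _
    _ = _ := by
        refine Finset.sum_congr rfl fun M _ => ?_
        exact MultilinearMap.map_smul_univ _ _ _

lemma phi_tprod (n : Fin ρ → ℕ) (x : ∀ i, Fin (n i) → F) :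
    phi n (⨂ₜ[F] i, x i) = simpleTensor n x := lift.tprod x

lemma psi_apply (n : Fin ρ → ℕ) (X : TSpace F n) :
    psi n X = ∑ M : ∀ i, Fin (n i), X M • ⨂ₜ[F] i, Pi.single (M i) (1 : F) := by
  simp [psi, LinearMap.sum_apply]

noncomputable def tensorEquiv (n : Fin ρ → ℕ) : (⨂[F] i, (Fin (n i) → F)) ≃ₗ[F] TSpace F n := by
  classical
  refine LinearEquiv.ofLinear (phi n) (psi n) ?_ ?_
  · refine Basis.ext (Pi.basisFun F (∀ i, Fin (n i))) fun M => ?_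
    rw [Pi.basisFun_apply]
    simp only [LinearMap.comp_apply, LinearMap.id_apply, psi_apply]
    rw [Finset.sum_eq_single M (fun M' _ hM' => by rw [Pi.single_apply, if_neg hM', zero_smul])
      (fun h => absurd (Finset.mem_univ M) h)]
    rw [Pi.single_eq_same, one_smul, phi_tprod, simpleTensor_single]
  · apply LinearMap.ext fun z => ?_
    simp only [LinearMap.comp_apply, LinearMap.id_apply]
    induction z using PiTensorProduct.induction_on with
    | smul_tprod c x =>
        rw [map_smul, map_smul, phi_tprod]
        rw [psi_apply, tprod_expansion n x]
        rfl
    | add u v hu hv => rw [map_add, map_add, hu, hv]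

lemma tensorEquiv_apply (n : Fin ρ → ℕ) (z) : (tensorEquiv n z : TSpace F n) = phi n z := rfl


lemma map_subtype_injective (n : Fin ρ → ℕ) (U : ∀ i, Submodule F (Fin (n i) → F)) :
    Function.Injective (PiTensorProduct.map fun i => (U i).subtype) := by
  choose π hπ using fun i =>
    LinearMap.exists_leftInverse_of_injective ((U i).subtype) (Submodule.ker_subtype _)
  have h : (PiTensorProduct.map π) ∘ₗ (PiTensorProduct.map fun i => (U i).subtype)
      = LinearMap.id := by
    rw [← PiTensorProduct.map_comp]
    have : (fun i => π i ∘ₗ (U i).subtype) = fun i => (LinearMap.id : U i →ₗ[F] U i) := by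
      funext i; exact hπ i
    rw [this, PiTensorProduct.map_id]
  intro a b hab
  have ha := LinearMap.congr_fun h a
  have hb := LinearMap.congr_fun h b
  simp only [LinearMap.comp_apply, LinearMap.id_apply] at ha hb
  rw [← ha, ← hb, hab]

noncomputable instance piTensorFD (n : Fin ρ → ℕ) (U : ∀ i, Submodule F (Fin (n i) → F)) :
    FiniteDimensional F (⨂[F] i, ↥(U i)) :=
  Module.Finite.equiv ((PiTensorProduct.congr fun i =>
    (Module.finBasis F (U i)).equivFun).trans (tensorEquiv _)).symm

lemma finrank_piTensor (n : Fin ρ → ℕ) (U : ∀ i, Submodule F (Fin (n i) → F)) :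
    finrank F (⨂[F] i, ↥(U i)) = ∏ i, finrank F (U i) := by
  rw [LinearEquiv.finrank_eq ((PiTensorProduct.congr fun i =>
    (Module.finBasis F (U i)).equivFun).trans (tensorEquiv _))]
  rw [Module.finrank_fintype_fun_eq_card, Fintype.card_pi]
  simp

lemma range_eq_closureAnticode (n : Fin ρ → ℕ) (U : ∀ i, Submodule F (Fin (n i) → F)) :
    LinearMap.range ((phi n) ∘ₗ (PiTensorProduct.map fun i => (U i).subtype))
      = closureAnticode n U := by
  rw [LinearMap.range_comp, PiTensorProduct.map_range_eq_span_tprod, Submodule.map_span]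
  unfold closureAnticode
  congr 1
  ext X
  constructor
  · rintro ⟨Y, ⟨m, rfl⟩, rfl⟩
    exact ⟨fun i => (m i : Fin (n i) → F), fun i => (m i).2, phi_tprod n fun i => (m i : Fin (n i) → F)⟩
  · rintro ⟨x, hx, rfl⟩
    exact ⟨_, ⟨fun i => ⟨x i, hx i⟩, rfl⟩, phi_tprod n _⟩

lemma finrank_closureAnticode (n : Fin ρ → ℕ) (U : ∀ i, Submodule F (Fin (n i) → F)) :
    finrank F (closureAnticode n U) = ∏ i, finrank F (U i) := by
  have hinj : Function.Injective ((phi n) ∘ₗ (PiTensorProduct.map fun i => (U i).subtype)) := by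
    rw [LinearMap.coe_comp]
    exact Function.Injective.comp ((tensorEquiv n).injective) (map_subtype_injective n U)
  rw [← range_eq_closureAnticode, LinearMap.finrank_range_of_inj hinj, finrank_piTensor]

section Dot

variable (F) {ι : Type*} [Fintype ι]

noncomputable def dotF : LinearMap.BilinForm F (ι → F) :=
  LinearMap.mk₂ F (fun X Y => ∑ m, X m * Y m)
    (by intros; simp [add_mul, Finset.sum_add_distrib])
    (by intros; simp [Finset.mul_sum, mul_assoc])
    (by intros; simp [mul_add, Finset.sum_add_distrib])
    (by intros; simp [Finset.mul_sum, mul_left_comm])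

lemma dotF_apply (X Y : ι → F) : dotF F X Y = ∑ m, X m * Y m := rfl

lemma dotF_refl : (dotF F (ι := ι)).IsRefl := by
  intro X Y h
  rw [dotF_apply] at h ⊢
  rw [← h]
  exact Finset.sum_congr rfl fun m _ => mul_comm _ _

lemma dotF_nondeg : (dotF F (ι := ι)).Nondegenerate := by
  classical
  refine ⟨fun X h => ?_, fun X h => ?_⟩ <;> funext m <;> have := h (Pi.single m 1) <;>
    rw [dotF_apply] at this <;>
    simpa [Pi.single_apply, mul_ite, ite_mul, Finset.sum_ite_eq'] using this

variable {F}

lemma dualCode_eq_orthogonal (C : Submodule F (ι → F)) :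
    dualCode C = (dotF F).orthogonal C := by
  ext X
  constructor
  · intro hX Y hY
    show dotF F Y X = 0
    exact dotF_refl F X Y (hX Y hY)
  · intro hX Y hY
    have : dotF F Y X = 0 := hX Y hY
    exact dotF_refl F Y X this

lemma finrank_add_finrank_dualCode (C : Submodule F (ι → F)) :
    finrank F C + finrank F (dualCode C) = Fintype.card ι := by
  rw [dualCode_eq_orthogonal]
  have h := LinearMap.BilinForm.finrank_add_finrank_orthogonal (B := dotF F) (dotF_refl F) C
  rw [LinearMap.BilinForm.orthogonal_top_eq_bot (dotF_nondeg F), inf_bot_eq,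
    finrank_bot, add_zero, Module.finrank_fintype_fun_eq_card] at h
  exact h

lemma eq_top_of_dualCode_eq_bot {C : Submodule F (ι → F)} (h : dualCode C = ⊥) : C = ⊤ := by
  apply Submodule.eq_top_of_finrank_eq
  have := finrank_add_finrank_dualCode C
  rw [h] at this
  simpa [Module.finrank_fintype_fun_eq_card] using this

lemma dualCode_sup (C A : Submodule F (ι → F)) :
    dualCode (C ⊔ A) = dualCode C ⊓ dualCode A := by
  simp only [dualCode_eq_orthogonal]
  apply le_antisymm
  · exact le_inf (LinearMap.BilinForm.orthogonal_le le_sup_left)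
      (LinearMap.BilinForm.orthogonal_le le_sup_right)
  · rintro X ⟨h1, h2⟩ Y hY
    obtain ⟨c, hc, a, ha, rfl⟩ := Submodule.mem_sup.1 hY
    have := h1 c hc
    have := h2 a ha
    show dotF F (c + a) X = 0
    rw [map_add, LinearMap.add_apply, h1 c hc, h2 a ha, add_zero]

end Dot

section Count

variable (F) in
lemma card_subspaces_mul (V : Type*) [AddCommGroup V] [Module F V] [Finite V]
    (a : ℕ) (ha : a ≤ finrank F V) :
    Nat.card {W : Submodule F V // finrank F ↥W = a}
        * ∏ i ∈ Finset.range a, (Fintype.card F ^ a - Fintype.card F ^ i)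
      = ∏ i ∈ Finset.range a, (Fintype.card F ^ finrank F V - Fintype.card F ^ i) := by
  classical
  haveI : Finite (Submodule F V) :=
    Finite.of_injective (fun W => (W : Set V)) SetLike.coe_injective
  set q := Fintype.card F
  -- the classifying map
  let f : {s : Fin a → V // LinearIndependent F s} → {W : Submodule F V // finrank F ↥W = a} :=
    fun s => ⟨Submodule.span F (Set.range s.1), by
      rw [finrank_span_eq_card s.2, Fintype.card_fin]⟩
  -- fibers of f
  have fiberEquiv : ∀ W : {W : Submodule F V // finrank F ↥W = a},
      {x : {s : Fin a → V // LinearIndependent F s} // f x = W}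
        ≃ {t : Fin a → ↥W.1 // LinearIndependent F t} := by
    intro W
    refine ⟨fun x => ⟨fun i => ⟨x.1.1 i, ?_⟩, ?_⟩, fun t => ⟨⟨fun i => (t.1 i : V), ?_⟩, ?_⟩,
      ?_, ?_⟩
    · have : x.1.1 i ∈ Submodule.span F (Set.range x.1.1) :=
        Submodule.subset_span ⟨i, rfl⟩
      have hW : Submodule.span F (Set.range x.1.1) = W.1 := congrArg Subtype.val x.2
      exact hW ▸ this
    · apply LinearIndependent.of_comp W.1.subtype
      exact x.1.2
    · exact t.2.map' W.1.subtype (Submodule.ker_subtype _)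
    · apply Subtype.ext
      show Submodule.span F (Set.range fun i => ((t.1 i : V))) = W.1
      have hspan : Submodule.span F (Set.range t.1) = (⊤ : Submodule F ↥W.1) := by
        rcases Nat.eq_zero_or_pos a with rfl | ha0
        · haveI : Subsingleton ↥W.1 := (Module.finrank_zero_iff (R := F)).1 W.2
          exact Subsingleton.elim _ _
        · haveI : Nonempty (Fin a) := ⟨⟨0, ha0⟩⟩
          exact LinearIndependent.span_eq_top_of_card_eq_finrank t.2
            (by rw [Fintype.card_fin]; exact W.2.symm)
      have hr : Set.range (fun i => ((t.1 i : V))) = W.1.subtype '' Set.range t.1 := by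
        rw [← Set.range_comp]; rfl
      rw [hr, ← Submodule.map_span, hspan, Submodule.map_top, Submodule.range_subtype]
    · intro x; apply Subtype.ext; apply Subtype.ext; funext i; rfl
    · intro t; apply Subtype.ext; funext i; apply Subtype.ext; rfl
  haveI : Fintype {W : Submodule F V // finrank F ↥W = a} := Fintype.ofFinite _
  haveI : Fintype {s : Fin a → V // LinearIndependent F s} := Fintype.ofFinite _
  have htotal : Nat.card {s : Fin a → V // LinearIndependent F s}
      = ∏ i ∈ Finset.range a, (q ^ finrank F V - q ^ i) := by
    rw [card_linearIndependent (K := F) ha]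
    exact Fin.prod_univ_eq_prod_range (fun i => q ^ finrank F V - q ^ i) a
  have hfiber : ∀ W : {W : Submodule F V // finrank F ↥W = a},
      Nat.card {x : {s : Fin a → V // LinearIndependent F s} // f x = W}
        = ∏ i ∈ Finset.range a, (q ^ a - q ^ i) := by
    intro W
    rw [Nat.card_congr (fiberEquiv W)]
    have : a ≤ finrank F ↥W.1 := W.2.symm.le
    rw [card_linearIndependent (K := F) this, W.2]
    exact Fin.prod_univ_eq_prod_range (fun i => q ^ a - q ^ i) a
  have hsigma := Nat.card_congr (Equiv.sigmaFiberEquiv f).symm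
  rw [htotal] at hsigma
  haveI : ∀ W, Fintype {x : {s : Fin a → V // LinearIndependent F s} // f x = W} :=
    fun W => Fintype.ofFinite _
  rw [Nat.card_eq_fintype_card, Fintype.card_sigma] at hsigma
  have : ∀ W ∈ Finset.univ, Fintype.card {x // f x = W}
      = ∏ i ∈ Finset.range a, (q ^ a - q ^ i) := by
    intro W _
    rw [← Nat.card_eq_fintype_card, hfiber W]
  rw [Finset.sum_congr rfl this, Finset.sum_const, smul_eq_mul, Finset.card_univ] at hsigma
  rw [Nat.card_eq_fintype_card, ← hsigma]

variable (F) in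
lemma card_subspaces_eq_qBinom (V : Type*) [AddCommGroup V] [Module F V] [Finite V]
    (a : ℕ) (ha : a ≤ finrank F V) :
    (Nat.card {W : Submodule F V // finrank F ↥W = a} : ℚ)
      = qBinom (Fintype.card F) (finrank F V) a := by
  classical
  set q := Fintype.card F with hqdef
  have hq1 : 1 < q := Fintype.one_lt_card
  have hq1' : (1 : ℚ) < (q : ℚ) := by exact_mod_cast hq1
  set m := finrank F V with hmdef
  set N := Nat.card {W : Submodule F V // finrank F ↥W = a} with hNdef
  have key := card_subspaces_mul F V a ha
  have hcast : ∀ b : ℕ, a ≤ b → ((∏ i ∈ Finset.range a, (q ^ b - q ^ i) : ℕ) : ℚ)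
      = (∏ i ∈ Finset.range a, (q : ℚ) ^ i)
        * ∏ i ∈ Finset.range a, ((q : ℚ) ^ (b - i) - 1) := by
    intro b hb
    rw [← Finset.prod_mul_distrib, Nat.cast_prod]
    refine Finset.prod_congr rfl fun i hi => ?_
    have hib : i ≤ b := le_trans (le_of_lt (Finset.mem_range.1 hi)) hb
    rw [Nat.cast_sub (Nat.pow_le_pow_right (le_of_lt hq1) hib)]
    rw [mul_sub, mul_one, ← pow_add, Nat.add_sub_cancel' hib]
    push_cast
    ring
  have keyQ : (N : ℚ) * ((∏ i ∈ Finset.range a, (q : ℚ) ^ i)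
        * ∏ i ∈ Finset.range a, ((q : ℚ) ^ (a - i) - 1))
      = (∏ i ∈ Finset.range a, (q : ℚ) ^ i)
        * ∏ i ∈ Finset.range a, ((q : ℚ) ^ (m - i) - 1) := by
    rw [← hcast a le_rfl, ← hcast m ha, ← Nat.cast_mul, key]
  have hPa : (∏ i ∈ Finset.range a, ((q : ℚ) ^ (a - i) - 1))
      = ∏ i ∈ Finset.range a, ((q : ℚ) ^ (i + 1) - 1) := by
    rw [← Finset.prod_range_reflect (fun i => (q : ℚ) ^ (i + 1) - 1) a]
    refine Finset.prod_congr rfl fun i hi => ?_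
    have := Finset.mem_range.1 hi
    congr 2
    omega
  have hQ : (∏ i ∈ Finset.range a, (q : ℚ) ^ i) ≠ 0 :=
    Finset.prod_ne_zero_iff.2 fun i _ => pow_ne_zero _ (by positivity)
  have hD : (∏ i ∈ Finset.range a, ((q : ℚ) ^ (i + 1) - 1)) ≠ 0 :=
    Finset.prod_ne_zero_iff.2 fun i _ =>
      sub_ne_zero.2 (ne_of_gt (one_lt_pow₀ hq1' (Nat.succ_ne_zero i)))
  rw [hPa] at keyQ
  have hND : (N : ℚ) * (∏ i ∈ Finset.range a, ((q : ℚ) ^ (i + 1) - 1))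
      = ∏ i ∈ Finset.range a, ((q : ℚ) ^ (m - i) - 1) := by
    apply mul_left_cancel₀ hQ
    rw [← keyQ]; ring
  have hNval : (N : ℚ) = (∏ i ∈ Finset.range a, ((q : ℚ) ^ (m - i) - 1))
      / ∏ i ∈ Finset.range a, ((q : ℚ) ^ (i + 1) - 1) := by
    rw [eq_div_iff hD, hND]
  rw [hNval, qBinom, if_neg (by exact_mod_cast not_lt.2 ha), Finset.prod_div_distrib]
  congr 1
  refine Finset.prod_congr rfl fun i _ => ?_
  rw [Int.toNat_sub]

end Count

section Slice

noncomputable def sliceMap (n : Fin ρ → ℕ) (i : Fin ρ) (m' : ∀ j, Fin (n j)) :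
    TSpace F n →ₗ[F] (Fin (n i) → F) where
  toFun X := fun t => X (Function.update m' i t)
  map_add' := by intros; rfl
  map_smul' := by intros; rfl

lemma slice_simpleTensor (n : Fin ρ → ℕ) (x : ∀ i, Fin (n i) → F) (i : Fin ρ)
    (m' : ∀ j, Fin (n j)) :
    sliceMap n i m' (simpleTensor n x)
      = (∏ j ∈ Finset.univ \ {i}, x j (m' j)) • x i := by
  classical
  funext t
  show (∏ j, x j (Function.update m' i t j)) = _
  have h : (fun j => x j (Function.update m' i t j))
      = Function.update (fun j => x j (m' j)) i (x i t) := by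
    funext j
    rcases eq_or_ne j i with rfl | hj
    · simp
    · simp [Function.update_of_ne hj]
  rw [h, Finset.prod_update_of_mem (Finset.mem_univ i)]
  simp [mul_comm]

lemma slice_mem_of_mem_closureAnticode (n : Fin ρ → ℕ)
    (V : ∀ i, Submodule F (Fin (n i) → F)) (i : Fin ρ) (m' : ∀ j, Fin (n j))
    {X : TSpace F n} (hX : X ∈ closureAnticode n V) :
    sliceMap n i m' X ∈ V i := by
  have h : closureAnticode n V ≤ (V i).comap (sliceMap n i m') := by
    rw [closureAnticode, Submodule.span_le]
    rintro X ⟨x, hx, rfl⟩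
    show sliceMap n i m' (simpleTensor n x) ∈ V i
    rw [slice_simpleTensor]
    exact Submodule.smul_mem _ _ (hx i)
  exact h hX

lemma le_of_closureAnticode_le (n : Fin ρ → ℕ)
    {U V : ∀ i, Submodule F (Fin (n i) → F)} (hU : ∀ j, U j ≠ ⊥)
    (h : closureAnticode n U ≤ closureAnticode n V) (i : Fin ρ) : U i ≤ V i := by
  classical
  intro u hu
  rcases eq_or_ne u 0 with rfl | hu0
  · exact zero_mem _
  choose w hw hw0 using fun j => Submodule.exists_mem_ne_zero_of_ne_bot (hU j)
  set x := Function.update w i u with hx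
  have hxmem : ∀ j, x j ∈ U j := by
    intro j
    rcases eq_or_ne j i with rfl | hj
    · simpa [hx] using hu
    · simpa [hx, Function.update_of_ne hj] using hw j
  have hx0 : ∀ j, x j ≠ 0 := by
    intro j
    rcases eq_or_ne j i with rfl | hj
    · simpa [hx] using hu0
    · simpa [hx, Function.update_of_ne hj] using hw0 j
  choose m' hm' using fun j => Function.ne_iff.1 (hx0 j)
  have hmem : sliceMap n i m' (simpleTensor n x) ∈ V i :=
    slice_mem_of_mem_closureAnticode n V i m'
      (h (Submodule.subset_span ⟨x, hxmem, rfl⟩))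
  rw [slice_simpleTensor] at hmem
  have hc : (∏ j ∈ Finset.univ \ {i}, x j (m' j)) ≠ 0 :=
    Finset.prod_ne_zero_iff.2 fun j _ => by simpa using hm' j
  have : x i ∈ V i := by
    have := Submodule.smul_mem (V i) (∏ j ∈ Finset.univ \ {i}, x j (m' j))⁻¹ hmem
    rwa [inv_smul_smul₀ hc] at this
  simpa [hx] using this

lemma closureAnticode_inj (n : Fin ρ → ℕ)
    {U V : ∀ i, Submodule F (Fin (n i) → F)} (hU : ∀ j, U j ≠ ⊥) (hV : ∀ j, V j ≠ ⊥)
    (h : closureAnticode n U = closureAnticode n V) : U = V :=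
  funext fun i => le_antisymm (le_of_closureAnticode_le n hU h.le i)
    (le_of_closureAnticode_le n hV h.ge i)

end Slice

lemma ncard_closureAnticodesOf (n : Fin ρ → ℕ) (𝔞 : Fin ρ → ℕ) (h1 : ∀ i, 1 ≤ 𝔞 i) :
    (closureAnticodesOf (F := F) n 𝔞).ncard
      = ∏ i, Nat.card {W : Submodule F (Fin (n i) → F) // finrank F ↥W = 𝔞 i} := by
  classical
  set T : Set (∀ i, Submodule F (Fin (n i) → F)) :=
    Set.univ.pi (fun i => {W | finrank F ↥W = 𝔞 i}) with hT
  have hmemT : ∀ U, U ∈ T ↔ ∀ i, finrank F ↥(U i) = 𝔞 i := by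
    intro U; simp [hT, Set.mem_pi]
  have himage : closureAnticodesOf (F := F) n 𝔞 = closureAnticode n '' T := by
    ext A
    constructor
    · rintro ⟨U, hU, rfl⟩
      exact ⟨U, (hmemT U).2 hU, rfl⟩
    · rintro ⟨U, hU, rfl⟩
      exact ⟨U, (hmemT U).1 hU, rfl⟩
  have hnb : ∀ U ∈ T, ∀ j, U j ≠ ⊥ := by
    intro U hU j hbot
    have := (hmemT U).1 hU j
    rw [hbot, finrank_bot] at this
    have h1j := h1 j
    omega
  have hinj : Set.InjOn (closureAnticode n) T := fun U hU V hV h =>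
    closureAnticode_inj n (hnb U hU) (hnb V hV) h
  rw [himage, Set.ncard_image_of_injOn hinj, ← Nat.card_coe_set_eq,
    Nat.card_congr (Equiv.Set.univPi _), Nat.card_pi]
  rfl


end Aux

/-- The refined tensor binomial moments `B_𝔞^{(cl,j)}(C)` vanish below `t_j^cl(C)` and are
determined by the code parameters above `n − s₁^cl(C^⊥)`. -/
theorem stmt16 {F : Type*} [Field F] [Fintype F] (r : ℕ) (n : Fin (r + 2) → ℕ)
    (hn1 : 2 ≤ n 0) (hmin : ∀ i, n 0 ≤ n i) (hmax : ∀ i, n i ≤ n (Fin.last (r + 1)))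
    (C : Submodule F (TSpace F n)) (j : ℕ) (hj1 : 1 ≤ j) (hjk : j ≤ finrank F ↥C)
    (𝔞 : Fin (r + 2) → ℕ)
    (h𝔞 : (∀ i, 1 ≤ 𝔞 i ∧ 𝔞 i ≤ n i) ∨ 𝔞 = 0) :
    ((∏ i, 𝔞 i) < tCl n j C → BCl n j C 𝔞 = 0) ∧
    (((∏ i, n i : ℕ) : ℤ) - sCl n 1 (dualCode C) < (∏ i, 𝔞 i : ℕ) →
      BCl n j C 𝔞
        = qBinom (Fintype.card F)
            ((finrank F ↥C : ℤ) + (∏ i, 𝔞 i : ℕ) - (∏ i, n i : ℕ)) j *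
          ∏ i, qBinom (Fintype.card F) (n i) (𝔞 i)) := by
  classical
  haveI : Finite (Submodule F (TSpace F n)) :=
    Finite.of_injective (fun W => (W : Set (TSpace F n))) SetLike.coe_injective
  set q := Fintype.card F with hqdef
  set N := ∏ i, n i with hNdef
  set a := ∏ i, 𝔞 i with hadef
  set k := finrank F ↥C with hkdef
  have hfrT : finrank F (TSpace F n) = N := by
    rw [Module.finrank_fintype_fun_eq_card, Fintype.card_pi]
    simp [hNdef]
  have hkN : k ≤ N := hfrT ▸ Submodule.finrank_le C
  have hSfin : (closureAnticodesOf (F := F) n 𝔞).Finite := Set.toFinite _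
  have hfrA : ∀ A ∈ closureAnticodesOf (F := F) n 𝔞, finrank F ↥A = a := by
    rintro A ⟨U, hU, rfl⟩
    rw [finrank_closureAnticode]
    exact Finset.prod_congr rfl fun i _ => hU i
  constructor
  · -- part 1
    intro hlt
    rw [BCl, finsum_mem_eq_finite_toFinset_sum _ hSfin]
    refine Finset.sum_eq_zero fun A hA => ?_
    rw [Set.Finite.mem_toFinset] at hA
    obtain ⟨U, hU, rfl⟩ := id hA
    have hfr := hfrA _ hA
    have hlt' : finrank F ↥(C ⊓ closureAnticode n U) < j := by
      by_contra hge
      push_neg at hge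
      have hmem : a ∈ { b | ∃ A ∈ ClosureAnticodes (F := F) n,
          j ≤ finrank F ↥(C ⊓ A) ∧ finrank F ↥A = b } :=
        ⟨closureAnticode n U, ⟨U, rfl⟩, hge, hfr⟩
      have := Nat.sInf_le hmem
      rw [tCl] at hlt
      omega
    rw [qBinom, if_pos (by exact_mod_cast hlt')]
  · -- part 2
    intro hgt
    rcases h𝔞 with h𝔞 | rfl
    · have haN : a ≤ N :=
        Finset.prod_le_prod' fun i _ => (h𝔞 i).2
      have hterm : ∀ A ∈ closureAnticodesOf (F := F) n 𝔞,
          qBinom q (finrank F ↥(C ⊓ A)) j = qBinom q ((k : ℤ) + a - N) j := by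
        intro A hA
        have hfr := hfrA A hA
        obtain ⟨U, hU, rfl⟩ := id hA
        set A := closureAnticode n U
        have hbot : dualCode C ⊓ dualCode A = ⊥ := by
          by_contra hne
          have h1 : 1 ≤ finrank F ↥(dualCode C ⊓ dualCode A) := by
            rcases Nat.eq_zero_or_pos (finrank F ↥(dualCode C ⊓ dualCode A)) with h0 | h1
            · exact absurd (Submodule.finrank_eq_zero.1 h0) hne
            · exact h1
          have hdual : finrank F ↥(dualCode A) = N - a := by
            have := finrank_add_finrank_dualCode A
            rw [hfr] at this
            have hcard : Fintype.card (∀ i, Fin (n i)) = N := by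
              rw [Fintype.card_pi]; simp [hNdef]
            omega
          have hle : sCl n 1 (dualCode C) ≤ N - a := by
            rw [sCl]
            exact Nat.sInf_le ⟨A, ⟨U, rfl⟩, h1, hdual⟩
          have : ((N - a : ℕ) : ℤ) = (N : ℤ) - a := by
            push_cast [Nat.cast_sub haN]; ring
          omega
        have htop : C ⊔ A = ⊤ := by
          apply eq_top_of_dualCode_eq_bot
          rw [dualCode_sup, hbot]
        have hsum := Submodule.finrank_sup_add_finrank_inf_eq C A
        rw [htop, finrank_top, hfrT, hfr] at hsum
        congr 1
        omega
      rw [BCl, finsum_mem_eq_finite_toFinset_sum _ hSfin]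
      rw [Finset.sum_congr rfl fun A hA => hterm A (hSfin.mem_toFinset.1 hA)]
      rw [Finset.sum_const, ← Set.ncard_eq_toFinset_card _ hSfin,
        ncard_closureAnticodesOf n 𝔞 (fun i => (h𝔞 i).1), nsmul_eq_mul, mul_comm]
      congr 1
      rw [Nat.cast_prod]
      refine Finset.prod_congr rfl fun i _ => ?_
      have hfri : finrank F (Fin (n i) → F) = n i := by
        rw [Module.finrank_fintype_fun_eq_card, Fintype.card_fin]
      rw [card_subspaces_eq_qBinom F (Fin (n i) → F) (𝔞 i) (by rw [hfri]; exact (h𝔞 i).2), hfri]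
    · -- 𝔞 = 0
      have ha0 : a = 0 := by
        rw [hadef]
        exact Finset.prod_eq_zero (Finset.mem_univ 0) rfl
      have hrhs : qBinom q ((k : ℤ) + a - N) j = 0 := by
        rw [qBinom, if_pos]
        rw [ha0]
        push_cast
        omega
      rw [hrhs, zero_mul]
      rw [BCl, finsum_mem_eq_finite_toFinset_sum _ hSfin]
      refine Finset.sum_eq_zero fun A hA => ?_
      rw [Set.Finite.mem_toFinset] at hA
      have hfr := hfrA A hA
      rw [ha0] at hfr
      have hAbot : A = ⊥ := Submodule.finrank_eq_zero.1 hfr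
      have : finrank F ↥(C ⊓ A) = 0 := by
        rw [hAbot, inf_bot_eq, finrank_bot]
      rw [qBinom, if_pos (by rw [this]; exact_mod_cast hj1)]


end TensorPaper
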